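/- Let a_{kl} = |X_k - X_l| and b_{kl} = |Y_k - Y_l| for sample points X₁,...,Xₙ ∈ ℝ^p, Y₁,...,Yₙ ∈ ℝ^q, with double-centered versions A_{kl}, B_{kl}. Then the empirical distance covariance V_n² = (1/n²)Σ_{k,l} A_{kl} B_{kl} is nonnegative. -/

import Mathlib

/-!
Double centering is compression by the centering matrix `J = I - 11ᵀ/n`: `A = J a J`, so
`vᵀ A v = (Jv)ᵀ a (Jv)` with `Σ (Jv)ₖ = 0`. Euclidean distance is conditionally negative definite: on the real line
`|s - t| = ∫ (1[u < s] - 1[u < t])² du` and `ΣΣ cₖ cₗ (fₖ - fₗ)² = -2 (Σ cₖ fₖ)²` when `Σ cₖ = 0`,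
and in higher dimension `‖x‖` is a positive multiple of `∫_{‖u‖ ≤ 1} |⟪u, x⟫| du` by rotation
invariance. Hence `-A` and `-B` are positive semidefinite, and `Σ Aₖₗ Bₖₗ ≥ 0` by the Schur
product theorem.
-/

open Finset MeasureTheory RealInnerProductSpace Metric Matrix

section
variable {ι : Type*} [Fintype ι]

theorem sum_sum_mul_mul_sub_sq (c f : ι → ℝ) (hc : ∑ k, c k = 0) :
    ∑ k, ∑ l, c k * c l * (f k - f l) ^ 2 = -2 * (∑ k, c k * f k) ^ 2 := by
  have hexp : ∀ k l, c k * c l * (f k - f l) ^ 2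
      = c k * f k ^ 2 * c l + c k * (c l * f l ^ 2) - 2 * (c k * f k) * (c l * f l) :=
    fun k l => by ring
  simp only [hexp, sum_sub_distrib, sum_add_distrib, ← mul_sum, ← sum_mul, hc]
  ring

theorem sum_sum_mul_integral_nonpos {α : Type*} [MeasurableSpace α] {μ : Measure α}
    (c : ι → ℝ) (f : ι → ι → α → ℝ) (hf : ∀ k l, Integrable (f k l) μ)
    (h : ∀ u, ∑ k, ∑ l, c k * c l * f k l u ≤ 0) :
    ∑ k, ∑ l, c k * c l * ∫ u, f k l u ∂μ ≤ 0 := by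
  have hf' : ∀ k, Integrable (fun u => ∑ l, c k * c l * f k l u) μ :=
    fun k => integrable_finsetSum _ fun l _ => (hf k l).const_mul _
  calc ∑ k, ∑ l, c k * c l * ∫ u, f k l u ∂μ = ∫ u, ∑ k, ∑ l, c k * c l * f k l u ∂μ := by
        rw [integral_finsetSum _ fun k _ => hf' k]
        refine sum_congr rfl fun k _ => ?_
        rw [integral_finsetSum _ fun l _ => (hf k l).const_mul _]
        simp only [integral_const_mul]
    _ ≤ 0 := integral_nonpos h

theorem sq_sub_indicator_Iio (s t : ℝ) :
    (fun u => ((Set.Iio s).indicator 1 u - (Set.Iio t).indicator 1 u : ℝ) ^ 2)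
      = (Set.Ico (min s t) (max s t)).indicator 1 := by
  funext u
  by_cases hs : u < s <;> by_cases ht : u < t <;> simp [hs, ht, le_of_not_gt]

theorem abs_sub_eq_integral_sq_sub_indicator (s t : ℝ) :
    |s - t| = ∫ u, ((Set.Iio s).indicator 1 u - (Set.Iio t).indicator 1 u : ℝ) ^ 2 := by
  rw [sq_sub_indicator_Iio, integral_indicator_one measurableSet_Ico, Real.volume_real_Ico,
    max_sub_min_eq_abs', max_eq_left (abs_nonneg _)]

theorem sum_sum_mul_abs_sub_nonpos (c t : ι → ℝ) (hc : ∑ k, c k = 0) :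
    ∑ k, ∑ l, c k * c l * |t k - t l| ≤ 0 := by
  simp only [abs_sub_eq_integral_sq_sub_indicator]
  refine sum_sum_mul_integral_nonpos c _ (fun k l => ?_) fun u => ?_
  · rw [sq_sub_indicator_Iio]
    exact (integrable_indicator_iff measurableSet_Ico).2 (integrableOn_const measure_Ico_lt_top.ne)
  · rw [sum_sum_mul_mul_sub_sq c _ hc]
    exact mul_nonpos_of_nonpos_of_nonneg (by norm_num) (sq_nonneg _)
end

section
variable {E : Type*} [NormedAddCommGroup E] [InnerProductSpace ℝ E] [FiniteDimensional ℝ E]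
  [MeasurableSpace E] [BorelSpace E]

theorem integrableOn_closedBall_abs_inner (x : E) :
    IntegrableOn (fun u => |⟪u, x⟫|) (closedBall 0 1) :=
  (by fun_prop : Continuous fun u : E => |⟪u, x⟫|).continuousOn.integrableOn_compact
    (isCompact_closedBall 0 1)

theorem setIntegral_closedBall_abs_inner_eq_of_norm_eq {x y : E} (h : ‖x‖ = ‖y‖) :
    ∫ u in closedBall 0 1, |⟪u, x⟫| = ∫ u in closedBall 0 1, |⟪u, y⟫| := by
  set R := Submodule.reflection (ℝ ∙ (x - y))ᗮ
  have hball : R ⁻¹' closedBall 0 1 = closedBall 0 1 := by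
    ext u; simp
  rw [← Submodule.reflection_sub h, ← R.measurePreserving.setIntegral_preimage_emb
    R.toHomeomorph.measurableEmbedding (fun u => |⟪u, R x⟫|), hball]
  simp only [LinearIsometryEquiv.inner_map_map]

theorem setIntegral_closedBall_abs_inner_smul (r : ℝ) (x : E) :
    ∫ u in closedBall 0 1, |⟪u, r • x⟫| = |r| * ∫ u in closedBall 0 1, |⟪u, x⟫| := by
  simp only [real_inner_smul_right, abs_mul, integral_const_mul]

theorem setIntegral_closedBall_abs_inner_pos {x : E} (hx : x ≠ 0) :
    0 < ∫ u in closedBall 0 1, |⟪u, x⟫| := by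
  rw [setIntegral_pos_iff_support_of_nonneg_ae (ae_of_all _ fun u => abs_nonneg _)
    (integrableOn_closedBall_abs_inner x)]
  have hopen : IsOpen ({u : E | ⟪u, x⟫ ≠ 0} ∩ ball 0 1) :=
    (isOpen_ne_fun (by fun_prop) continuous_const).inter isOpen_ball
  have hx' : 0 < ‖x‖ := norm_pos_iff.2 hx
  have hmem : (2 * ‖x‖)⁻¹ • x ∈ {u : E | ⟪u, x⟫ ≠ 0} ∩ ball 0 1 := by
    refine ⟨?_, ?_⟩
    · simp [real_inner_smul_left, hx]
    · norm_num [norm_smul, mul_right_comm _ _ ‖x‖, hx'.ne']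
  refine (hopen.measure_pos volume ⟨_, hmem⟩).trans_le (measure_mono ?_)
  rintro u ⟨hu, hball⟩
  exact ⟨abs_ne_zero.2 hu, ball_subset_closedBall hball⟩

theorem exists_setIntegral_closedBall_abs_inner_eq [Nontrivial E] :
    ∃ κ > 0, ∀ x : E, ∫ u in closedBall 0 1, |⟪u, x⟫| = κ * ‖x‖ := by
  obtain ⟨e, he⟩ := exists_norm_eq E zero_le_one
  refine ⟨_, setIntegral_closedBall_abs_inner_pos (norm_ne_zero_iff.1 (he.trans_ne one_ne_zero)),
    fun x => ?_⟩
  have hnorm : ‖x‖ = ‖‖x‖ • e‖ := by simp [norm_smul, he]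
  rw [setIntegral_closedBall_abs_inner_eq_of_norm_eq hnorm, setIntegral_closedBall_abs_inner_smul,
    abs_norm, mul_comm]

end

section
variable {ι E : Type*} [Fintype ι] [NormedAddCommGroup E] [InnerProductSpace ℝ E]

theorem sum_sum_mul_dist_nonpos_of_finiteDimensional [FiniteDimensional ℝ E] [MeasurableSpace E]
    [BorelSpace E] (c : ι → ℝ) (hc : ∑ k, c k = 0) (x : ι → E) :
    ∑ k, ∑ l, c k * c l * dist (x k) (x l) ≤ 0 := by
  rcases subsingleton_or_nontrivial E with hE | hE
  · have hdist : ∀ k l, dist (x k) (x l) = 0 := fun k l => by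
      rw [Subsingleton.elim (x k) (x l), dist_self]
    simp [hdist]
  obtain ⟨κ, hκ, hκx⟩ := exists_setIntegral_closedBall_abs_inner_eq (E := E)
  have h := sum_sum_mul_integral_nonpos c (fun k l u => |⟪u, x k⟫ - ⟪u, x l⟫|)
    (fun k l => by
      simpa only [← inner_sub_right] using
        (integrableOn_closedBall_abs_inner (x k - x l)).integrable)
    (fun u => sum_sum_mul_abs_sub_nonpos c _ hc)
  simp only [← inner_sub_right, hκx, ← dist_eq_norm, mul_left_comm _ κ, ← mul_sum] at h
  exact nonpos_of_mul_nonpos_right h hκ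

theorem sum_sum_mul_dist_nonpos (c : ι → ℝ) (hc : ∑ k, c k = 0) (x : ι → E) :
    ∑ k, ∑ l, c k * c l * dist (x k) (x l) ≤ 0 := by
  let F := Submodule.span ℝ (Set.range x)
  let _ : MeasurableSpace F := borel F
  have _ : BorelSpace F := ⟨rfl⟩
  have _ : FiniteDimensional ℝ F := FiniteDimensional.span_of_finite ℝ (Set.finite_range x)
  exact sum_sum_mul_dist_nonpos_of_finiteDimensional c hc
    fun k => (⟨x k, Submodule.subset_span ⟨k, rfl⟩⟩ : F)
end

noncomputable section
variable {ι : Type*} [Fintype ι]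

def doubleCenter (a : Matrix ι ι ℝ) : Matrix ι ι ℝ :=
  of fun k l => a k l
    - (1 / (Fintype.card ι : ℝ)) * ∑ j, a k j
    - (1 / (Fintype.card ι : ℝ)) * ∑ i, a i l
    + (1 / (Fintype.card ι : ℝ) ^ 2) * ∑ i, ∑ j, a i j

theorem dotProduct_mulVec_eq_sum_sum (a : Matrix ι ι ℝ) (v : ι → ℝ) :
    v ⬝ᵥ (a *ᵥ v) = ∑ k, ∑ l, v k * v l * a k l := by
  simp only [dotProduct, mulVec, mul_sum]
  exact sum_congr rfl fun k _ => sum_congr rfl fun l _ => by ring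

variable [DecidableEq ι]

def centeringMatrix (ι : Type*) [Fintype ι] [DecidableEq ι] : Matrix ι ι ℝ :=
  1 - (1 / (Fintype.card ι : ℝ)) • of fun _ _ => 1

theorem centeringMatrix_transpose : (centeringMatrix ι)ᵀ = centeringMatrix ι := by
  ext k l
  simp [centeringMatrix, one_apply, eq_comm]

theorem sum_centeringMatrix_mulVec (v : ι → ℝ) : ∑ k, (centeringMatrix ι *ᵥ v) k = 0 := by
  rcases isEmpty_or_nonempty ι with hι | hι
  · simp
  have hcard : (Fintype.card ι : ℝ) ≠ 0 := Nat.cast_ne_zero.2 Fintype.card_ne_zero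
  simp [centeringMatrix, mulVec, dotProduct, sub_mul, sum_sub_distrib, one_apply, ← mul_sum]

theorem doubleCenter_eq_centeringMatrix_mul_mul (a : Matrix ι ι ℝ) :
    doubleCenter a = centeringMatrix ι * a * centeringMatrix ι := by
  ext k l
  simp [doubleCenter, centeringMatrix, sub_mul, mul_sub, mul_apply, one_apply, sum_sub_distrib,
    ← mul_sum, ← sum_mul]
  rw [sum_comm]
  ring

theorem dotProduct_doubleCenter_mulVec (a : Matrix ι ι ℝ) (v : ι → ℝ) :
    v ⬝ᵥ (doubleCenter a *ᵥ v)
      = (centeringMatrix ι *ᵥ v) ⬝ᵥ (a *ᵥ (centeringMatrix ι *ᵥ v)) := by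
  rw [doubleCenter_eq_centeringMatrix_mul_mul, ← mulVec_mulVec, ← mulVec_mulVec, dotProduct_mulVec,
    ← mulVec_transpose, centeringMatrix_transpose]

theorem posSemidef_neg_doubleCenter {a : Matrix ι ι ℝ} (ha : aᵀ = a)
    (hneg : ∀ c : ι → ℝ, ∑ k, c k = 0 → ∑ k, ∑ l, c k * c l * a k l ≤ 0) :
    (-doubleCenter a).PosSemidef := by
  refine .of_dotProduct_mulVec_nonneg ?_ fun v => ?_
  · rw [IsHermitian, conjTranspose_eq_transpose_of_trivial, transpose_neg,
      doubleCenter_eq_centeringMatrix_mul_mul, transpose_mul, transpose_mul, ha,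
      centeringMatrix_transpose, Matrix.mul_assoc]
  · rw [star_trivial, neg_mulVec, dotProduct_neg, dotProduct_doubleCenter_mulVec,
      dotProduct_mulVec_eq_sum_sum, neg_nonneg]
    exact hneg _ (sum_centeringMatrix_mulVec v)
end

theorem sum_sum_mul_nonneg_of_posSemidef {ι : Type*} [Fintype ι] {P Q : Matrix ι ι ℝ}
    (hP : P.PosSemidef) (hQ : Q.PosSemidef) : 0 ≤ ∑ k, ∑ l, P k l * Q k l := by
  simpa [dotProduct, mulVec, mul_sum] using (hP.hadamard hQ).dotProduct_mulVec_nonneg 1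

theorem posSemidef_neg_doubleCenter_dist {ι E : Type*} [Fintype ι] [NormedAddCommGroup E]
    [InnerProductSpace ℝ E] (x : ι → E) :
    (-doubleCenter (of fun k l => dist (x k) (x l))).PosSemidef := by
  classical
  exact posSemidef_neg_doubleCenter (by ext; simp [dist_comm])
    fun c hc => sum_sum_mul_dist_nonpos c hc x

theorem empirical_dcov_nonneg_general (n p q : ℕ)
    (X : Fin n → EuclideanSpace ℝ (Fin p)) (Y : Fin n → EuclideanSpace ℝ (Fin q))
    (A B : Fin n → Fin n → ℝ)
    (hA : ∀ k l, A k l = dist (X k) (X l)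
      - (1 / (n : ℝ)) * ∑ j, dist (X k) (X j)
      - (1 / (n : ℝ)) * ∑ i, dist (X i) (X l)
      + (1 / (n : ℝ) ^ 2) * ∑ i, ∑ j, dist (X i) (X j))
    (hB : ∀ k l, B k l = dist (Y k) (Y l)
      - (1 / (n : ℝ)) * ∑ j, dist (Y k) (Y j)
      - (1 / (n : ℝ)) * ∑ i, dist (Y i) (Y l)
      + (1 / (n : ℝ) ^ 2) * ∑ i, ∑ j, dist (Y i) (Y j)) :
    0 ≤ (1 / (n : ℝ) ^ 2) * ∑ k, ∑ l, A k l * B k l := by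
  have hA' : of A = doubleCenter (of fun k l => dist (X k) (X l)) := by
    ext k l; simp [doubleCenter, hA]
  have hB' : of B = doubleCenter (of fun k l => dist (Y k) (Y l)) := by
    ext k l; simp [doubleCenter, hB]
  have h := sum_sum_mul_nonneg_of_posSemidef (posSemidef_neg_doubleCenter_dist X)
    (posSemidef_neg_doubleCenter_dist Y)
  rw [← hA', ← hB'] at h
  simp only [Matrix.neg_apply, of_apply, neg_mul_neg] at h
  exact mul_nonneg (by positivity) h

/-- The empirical distance covariance `V_n² = (1/n²) Σ A_{kl} B_{kl}` is nonnegative,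
where `A` and `B` are the double-centered distance matrices of the two samples. -/
theorem empirical_dcov_nonneg (n p q : ℕ) (hn : 0 < n)
    (X : Fin n → EuclideanSpace ℝ (Fin p)) (Y : Fin n → EuclideanSpace ℝ (Fin q))
    (A B : Fin n → Fin n → ℝ)
    (hA : ∀ k l, A k l = dist (X k) (X l)
      - (1 / (n : ℝ)) * ∑ j, dist (X k) (X j)
      - (1 / (n : ℝ)) * ∑ i, dist (X i) (X l)
      + (1 / (n : ℝ) ^ 2) * ∑ i, ∑ j, dist (X i) (X j))
    (hB : ∀ k l, B k l = dist (Y k) (Y l)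
      - (1 / (n : ℝ)) * ∑ j, dist (Y k) (Y j)
      - (1 / (n : ℝ)) * ∑ i, dist (Y i) (Y l)
      + (1 / (n : ℝ) ^ 2) * ∑ i, ∑ j, dist (Y i) (Y j)) :
    0 ≤ (1 / (n : ℝ) ^ 2) * ∑ k, ∑ l, A k l * B k l :=
  empirical_dcov_nonneg_general n p q X Y A B hA hB
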